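/- For every s ∈ (-1,1), 0 ≤ F_log(s) - [((θ-θ_c)/2)s² + (θ/12)s⁴] ≤ (θ/30)·s⁶/(1-s²); in particular, F_log(s) = ((θ-θ_c)/2)s² + (θ/12)s⁴ + O(s⁶) as s → 0. In the special case θ = 3 and θ_c = 4, this gives |F_log(s) + 1/4 - F_reg(s)| ≤ s⁶/(10(1-s²)) for all s ∈ (-1,1), where F_reg(s) = (1/4)(1-s²)² is the regular double-well potential. -/
import Mathlib


/-- The logarithmic (Flory–Huggins) potential
`F_log(s) = (θ/2)[(1+s)ln(1+s) + (1-s)ln(1-s)] - (θ_c/2)s²`. -/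
noncomputable def Flog (θ θc s : ℝ) : ℝ :=
  θ / 2 * ((1 + s) * Real.log (1 + s) + (1 - s) * Real.log (1 - s)) - θc / 2 * s ^ 2

/-- The regular double-well potential `F_reg(s) = (1/4)(1-s²)²`. -/
noncomputable def Freg (s : ℝ) : ℝ := 1 / 4 * (1 - s ^ 2) ^ 2

open Real in
lemma G_key (s : ℝ) (hs : s ∈ Set.Ioo (-1 : ℝ) 1) :
    0 ≤ (1 + s) * Real.log (1 + s) + (1 - s) * Real.log (1 - s) - (s ^ 2 + s ^ 4 / 6) ∧
    (1 + s) * Real.log (1 + s) + (1 - s) * Real.log (1 - s) - (s ^ 2 + s ^ 4 / 6)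
      ≤ s ^ 6 / (15 * (1 - s ^ 2)) := by
  obtain ⟨hs1, hs2⟩ := hs
  have habs : |s| < 1 := abs_lt.mpr ⟨hs1, hs2⟩
  have hsq : s ^ 2 < 1 := by
    rw [← one_pow 2]; exact (sq_lt_sq' hs1 hs2).trans_eq (by norm_num)
  have hsqpos : 0 < 1 - s ^ 2 := by linarith
  have h1p : (0 : ℝ) < 1 + s := by linarith
  have h1m : (0 : ℝ) < 1 - s := by linarith
  -- series for -log(1-s²)
  have h1 : HasSum (fun n : ℕ => (s ^ 2) ^ (n + 1) / (n + 1)) (-Real.log (1 - s ^ 2)) :=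
    Real.hasSum_pow_div_log_of_abs_lt_one (by rwa [abs_of_nonneg (sq_nonneg s)])
  have h2 : HasSum (fun k : ℕ => s * ((2 : ℝ) * (1 / (2 * k + 1)) * s ^ (2 * k + 1)))
      (s * (Real.log (1 + s) - Real.log (1 - s))) :=
    (Real.hasSum_log_sub_log_of_abs_lt_one habs).mul_left s
  have h3 := h2.sub h1
  have hval : s * (Real.log (1 + s) - Real.log (1 - s)) - -Real.log (1 - s ^ 2)
      = (1 + s) * Real.log (1 + s) + (1 - s) * Real.log (1 - s) := by
    have : (1 : ℝ) - s ^ 2 = (1 + s) * (1 - s) := by ring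
    rw [this, Real.log_mul h1p.ne' h1m.ne']
    ring
  have hterm : ∀ n : ℕ, s * ((2 : ℝ) * (1 / (2 * n + 1)) * s ^ (2 * n + 1))
      - (s ^ 2) ^ (n + 1) / (n + 1) = s ^ (2 * n + 2) / ((2 * n + 1) * (n + 1)) := by
    intro n
    have hd1 : ((2 : ℝ) * n + 1) ≠ 0 := by positivity
    have hd2 : ((n : ℝ) + 1) ≠ 0 := by positivity
    have e1 : (s ^ 2) ^ (n + 1) = s ^ (2 * n + 2) := by
      rw [← pow_mul]; ring_nf
    have e2 : s * s ^ (2 * n + 1) = s ^ (2 * n + 2) := (pow_succ' s (2 * n + 1)).symm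
    rw [e1, show s * ((2 : ℝ) * (1 / (2 * ↑n + 1)) * s ^ (2 * n + 1))
        = (2 : ℝ) * (1 / (2 * ↑n + 1)) * (s * s ^ (2 * n + 1)) from by ring, e2]
    field_simp
    ring
  have hG : HasSum (fun n : ℕ => s ^ (2 * n + 2) / ((2 * n + 1) * (n + 1)))
      ((1 + s) * Real.log (1 + s) + (1 - s) * Real.log (1 - s)) := by
    exact hval ▸ h3.congr_fun fun n => (hterm n).symm
  -- tail
  set G := (1 + s) * Real.log (1 + s) + (1 - s) * Real.log (1 - s) with hGdef
  have hsum2 : (∑ i ∈ Finset.range 2, s ^ (2 * i + 2) / ((2 * (i : ℝ) + 1) * (i + 1)))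
      = s ^ 2 + s ^ 4 / 6 := by
    simp [Finset.sum_range_succ]
    norm_num
  have htail : HasSum (fun n : ℕ => s ^ (2 * (n + 2) + 2) / ((2 * ((n : ℝ) + 2) + 1) * ((n + 2) + 1)))
      (G - (s ^ 2 + s ^ 4 / 6)) := by
    have := (hasSum_nat_add_iff' (f := fun n : ℕ => s ^ (2 * n + 2) / ((2 * (n : ℝ) + 1) * (n + 1))) 2).mpr hG
    rw [hsum2] at this
    refine this.congr_fun fun n => ?_
    push_cast
    norm_num
  have hnn : ∀ n : ℕ, 0 ≤ s ^ (2 * (n + 2) + 2) / ((2 * ((n : ℝ) + 2) + 1) * ((n + 2) + 1)) := by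
    intro n
    have : s ^ (2 * (n + 2) + 2) = (s ^ 2) ^ (n + 3) := by
      rw [← pow_mul]; ring_nf
    rw [this]
    positivity
  constructor
  · exact hasSum_le (fun n => hnn n) hasSum_zero htail
  · have hgeo : HasSum (fun n : ℕ => s ^ 6 / 15 * (s ^ 2) ^ n)
        (s ^ 6 / 15 * (1 - s ^ 2)⁻¹) :=
      (hasSum_geometric_of_lt_one (sq_nonneg s) hsq).mul_left _
    have hle : ∀ n : ℕ, s ^ (2 * (n + 2) + 2) / ((2 * ((n : ℝ) + 2) + 1) * ((n + 2) + 1))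
        ≤ s ^ 6 / 15 * (s ^ 2) ^ n := by
      intro n
      have he : s ^ (2 * (n + 2) + 2) = (s ^ 2) ^ (n + 3) := by
        rw [← pow_mul]; ring_nf
      have he2 : s ^ 6 / 15 * (s ^ 2) ^ n = (s ^ 2) ^ (n + 3) / 15 := by
        rw [pow_add, ← pow_mul]; ring
      rw [he, he2]
      have hD : (15 : ℝ) ≤ (2 * ((n : ℝ) + 2) + 1) * ((n + 2) + 1) := by
        have : (0 : ℝ) ≤ (n : ℝ) := n.cast_nonneg
        nlinarith
      exact div_le_div_of_nonneg_left (pow_nonneg (sq_nonneg s) _) (by norm_num) hD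
    have := hasSum_le hle htail hgeo
    calc G - (s ^ 2 + s ^ 4 / 6) ≤ s ^ 6 / 15 * (1 - s ^ 2)⁻¹ := this
      _ = s ^ 6 / (15 * (1 - s ^ 2)) := by rw [← div_eq_mul_inv, div_div]
  
/-- Taylor approximation of the logarithmic potential: for `s ∈ (-1,1)` one has
`0 ≤ F_log(s) - [((θ-θ_c)/2)s² + (θ/12)s⁴] ≤ (θ/30)s⁶/(1-s²)`; in particular, for
`θ = 3`, `θ_c = 4`, `|F_log(s) + 1/4 - F_reg(s)| ≤ s⁶/(10(1-s²))`. -/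
theorem stmt4 (θ θc : ℝ) (hθ : 0 < θ) (hθc : θ < θc) :
    ∀ s ∈ Set.Ioo (-1 : ℝ) 1,
      (0 ≤ Flog θ θc s - ((θ - θc) / 2 * s ^ 2 + θ / 12 * s ^ 4)) ∧
      (Flog θ θc s - ((θ - θc) / 2 * s ^ 2 + θ / 12 * s ^ 4) ≤ θ / 30 * s ^ 6 / (1 - s ^ 2)) ∧
      |Flog 3 4 s + 1 / 4 - Freg s| ≤ s ^ 6 / (10 * (1 - s ^ 2)) := by
  intro s hs
  obtain ⟨hlo, hhi⟩ := G_key s hs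
  obtain ⟨hs1, hs2⟩ := hs
  have hsq : s ^ 2 < 1 := by
    rw [← one_pow 2]; exact (sq_lt_sq' hs1 hs2).trans_eq (by norm_num)
  have hsqpos : 0 < 1 - s ^ 2 := by linarith
  set G := (1 + s) * Real.log (1 + s) + (1 - s) * Real.log (1 - s) with hGdef
  have hfl : Flog θ θc s - ((θ - θc) / 2 * s ^ 2 + θ / 12 * s ^ 4)
      = θ / 2 * (G - (s ^ 2 + s ^ 4 / 6)) := by
    simp only [Flog, hGdef]; ring
  have hfl3 : Flog 3 4 s + 1 / 4 - Freg s = 3 / 2 * (G - (s ^ 2 + s ^ 4 / 6)) := by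
    simp only [Flog, Freg, hGdef]; ring
  refine ⟨?_, ?_, ?_⟩
  · rw [hfl]; positivity
  · rw [hfl]
    calc θ / 2 * (G - (s ^ 2 + s ^ 4 / 6)) ≤ θ / 2 * (s ^ 6 / (15 * (1 - s ^ 2))) :=
          mul_le_mul_of_nonneg_left hhi (by positivity)
      _ = θ / 30 * s ^ 6 / (1 - s ^ 2) := by rw [mul_comm (15:ℝ), ← div_div]; ring
  · rw [hfl3, abs_of_nonneg (by positivity)]
    calc 3 / 2 * (G - (s ^ 2 + s ^ 4 / 6)) ≤ 3 / 2 * (s ^ 6 / (15 * (1 - s ^ 2))) :=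
          mul_le_mul_of_nonneg_left hhi (by norm_num)
      _ = s ^ 6 / (10 * (1 - s ^ 2)) := by field_simp [hsqpos.ne']; ring
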